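/- Define Z3 = v1²Ω / (A²G+(1−V²)^{(2−γ)/2}). Along any solution of the tilted Bianchi type VI_{-1/9} system lying in the invariant set v2 = v3 = 0 (so V = |v1|), with Ω > 0, A ≠ 0 and v1² < 1, one has the identity Z3' = −(2−γ)(3−2A v1)·Z3. In particular Z3 is strictly monotonically decreasing there whenever Z3 > 0 and γ < 2. -/

import Mathlib

noncomputable section

namespace BianchiVI

/-- squared tilt speed `V² = v1² + v2² + v3²`. -/
def Vsq (v1 v2 v3 : ℝ) : ℝ := v1^2 + v2^2 + v3^2

/-- `G₊ = 1 + (γ-1) V²`. -/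
def Gp (γ v1 v2 v3 : ℝ) : ℝ := 1 + (γ - 1) * Vsq v1 v2 v3

/-- total shear `Σ²`. -/
def Sig2 (sp sm s12 s13 s23 : ℝ) : ℝ := sp^2 + sm^2 + s12^2 + s13^2 + s23^2

/-- deceleration parameter `q`. -/
def qdef (γ sp sm s12 s13 s23 Om v1 v2 v3 : ℝ) : ℝ :=
  2 * Sig2 sp sm s12 s13 s23
    + (1/2) * ((3*γ - 2) + (2 - γ) * Vsq v1 v2 v3) * Om / Gp γ v1 v2 v3

/-- `P = Σ_{ab} v^a v^b · V²`, so that `S = P/V²`. -/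
def Pdef (sp sm s12 s13 s23 v1 v2 v3 : ℝ) : ℝ :=
  -2*sp*v1^2 + (sp + Real.sqrt 3 * sm) * v2^2 + (sp - Real.sqrt 3 * sm) * v3^2
    + 2*Real.sqrt 3*(s12*v1*v2 + s13*v1*v3 + s23*v2*v3)

/-- `S = Σ_{ab} c^a c^b`. -/
def Sdef (sp sm s12 s13 s23 v1 v2 v3 : ℝ) : ℝ :=
  if 0 < Vsq v1 v2 v3 then Pdef sp sm s12 s13 s23 v1 v2 v3 / Vsq v1 v2 v3 else 0

/-- the quantity `T`. -/
def Tdef (γ sp sm s12 s13 s23 A v1 v2 v3 : ℝ) : ℝ :=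
  (((3*γ - 4) - 2*(γ-1)*A*v1) * (1 - Vsq v1 v2 v3)
      + (2 - γ) * Pdef sp sm s12 s13 s23 v1 v2 v3)
    / (1 - (γ - 1) * Vsq v1 v2 v3)

/-- right-hand side of the evolution equation. -/
def rhsSp (γ sp sm s12 s13 s23 N lam A Om v1 v2 v3 : ℝ) : ℝ :=
  (qdef γ sp sm s12 s13 s23 Om v1 v2 v3 - 2) * sp + 3*(s12^2 + s13^2) - 2*N^2 + (γ*Om/(2*(Gp γ v1 v2 v3))) * (-2*v1^2 + v2^2 + v3^2)

/-- right-hand side of the evolution equation. -/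
def rhsSm (γ sp sm s12 s13 s23 N lam A Om v1 v2 v3 : ℝ) : ℝ :=
  (qdef γ sp sm s12 s13 s23 Om v1 v2 v3 - 2 - 2*Real.sqrt 3*s23*lam) * sm + Real.sqrt 3*(s12^2 - s13^2) + 2*A*N + (Real.sqrt 3*γ*Om/(2*(Gp γ v1 v2 v3))) * (v2^2 - v3^2)

/-- right-hand side of the evolution equation. -/
def rhsS12 (γ sp sm s12 s13 s23 N lam A Om v1 v2 v3 : ℝ) : ℝ :=
  (qdef γ sp sm s12 s13 s23 Om v1 v2 v3 - 2 - 3*sp - Real.sqrt 3*sm) * s12 - Real.sqrt 3*(s23 + sm*lam)*s13 + (Real.sqrt 3*γ*Om/(Gp γ v1 v2 v3))*v1*v2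

/-- right-hand side of the evolution equation. -/
def rhsS13 (γ sp sm s12 s13 s23 N lam A Om v1 v2 v3 : ℝ) : ℝ :=
  (qdef γ sp sm s12 s13 s23 Om v1 v2 v3 - 2 - 3*sp + Real.sqrt 3*sm) * s13 - Real.sqrt 3*(s23 - sm*lam)*s12 + (Real.sqrt 3*γ*Om/(Gp γ v1 v2 v3))*v1*v3

/-- right-hand side of the evolution equation. -/
def rhsS23 (γ sp sm s12 s13 s23 N lam A Om v1 v2 v3 : ℝ) : ℝ :=
  (qdef γ sp sm s12 s13 s23 Om v1 v2 v3 - 2) * s23 - 2*Real.sqrt 3*N^2*lam + 2*Real.sqrt 3*lam*sm^2 + 2*Real.sqrt 3*s12*s13 + (Real.sqrt 3*γ*Om/(Gp γ v1 v2 v3))*v2*v3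

/-- right-hand side of the evolution equation. -/
def rhsN (γ sp sm s12 s13 s23 N lam A Om v1 v2 v3 : ℝ) : ℝ :=
  (qdef γ sp sm s12 s13 s23 Om v1 v2 v3 + 2*sp + 2*Real.sqrt 3*s23*lam) * N

/-- right-hand side of the evolution equation. -/
def rhsLam (γ sp sm s12 s13 s23 N lam A Om v1 v2 v3 : ℝ) : ℝ :=
  2*Real.sqrt 3*s23*(1 - lam^2)

/-- right-hand side of the evolution equation. -/
def rhsA (γ sp sm s12 s13 s23 N lam A Om v1 v2 v3 : ℝ) : ℝ :=
  (qdef γ sp sm s12 s13 s23 Om v1 v2 v3 + 2*sp) * A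

/-- right-hand side of the evolution equation. -/
def rhsOm (γ sp sm s12 s13 s23 N lam A Om v1 v2 v3 : ℝ) : ℝ :=
  (Om/(Gp γ v1 v2 v3)) * (2*(qdef γ sp sm s12 s13 s23 Om v1 v2 v3) - (3*γ-2) + 2*γ*A*v1 + (2*(qdef γ sp sm s12 s13 s23 Om v1 v2 v3)*(γ-1) - (2-γ)) * Vsq v1 v2 v3 - γ*(Pdef sp sm s12 s13 s23 v1 v2 v3))

/-- right-hand side of the evolution equation. -/
def rhsV1 (γ sp sm s12 s13 s23 N lam A Om v1 v2 v3 : ℝ) : ℝ :=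
  ((Tdef γ sp sm s12 s13 s23 A v1 v2 v3) + 2*sp)*v1 - 2*Real.sqrt 3*s13*v3 - 2*Real.sqrt 3*s12*v2 - A*(v2^2 + v3^2) - Real.sqrt 3*N*(v2^2 - v3^2)

/-- right-hand side of the evolution equation. -/
def rhsV2 (γ sp sm s12 s13 s23 N lam A Om v1 v2 v3 : ℝ) : ℝ :=
  ((Tdef γ sp sm s12 s13 s23 A v1 v2 v3) - sp - Real.sqrt 3*sm)*v2 - Real.sqrt 3*(s23 + sm*lam)*v3 + Real.sqrt 3*lam*N*v1*v3 + (A + Real.sqrt 3*N)*v1*v2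

/-- right-hand side of the evolution equation. -/
def rhsV3 (γ sp sm s12 s13 s23 N lam A Om v1 v2 v3 : ℝ) : ℝ :=
  ((Tdef γ sp sm s12 s13 s23 A v1 v2 v3) - sp + Real.sqrt 3*sm)*v3 - Real.sqrt 3*(s23 - sm*lam)*v2 - Real.sqrt 3*lam*N*v1*v2 + (A - Real.sqrt 3*N)*v1*v3

/-- the five constraint equations (C1)-(C5). -/
def SatisfiesConstraints (γ sp sm s12 s13 s23 N lam A Om v1 v2 v3 : ℝ) : Prop :=
  Sig2 sp sm s12 s13 s23 + A^2 + N^2 + Om = 1 ∧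
  2*sp*A + 2*sm*N + γ*Om*v1/(Gp γ v1 v2 v3) = 0 ∧
  -(s12*(N + Real.sqrt 3*A) + s13*lam*N) + γ*Om*v2/(Gp γ v1 v2 v3) = 0 ∧
  s13*(N - Real.sqrt 3*A) + s12*lam*N + γ*Om*v3/(Gp γ v1 v2 v3) = 0 ∧
  3*A^2 = (1 - lam^2)*N^2

/-- equilibrium point: all twelve right-hand sides vanish. -/
def IsEquilibrium (γ sp sm s12 s13 s23 N lam A Om v1 v2 v3 : ℝ) : Prop :=
  rhsSp γ sp sm s12 s13 s23 N lam A Om v1 v2 v3 = 0 ∧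
  rhsSm γ sp sm s12 s13 s23 N lam A Om v1 v2 v3 = 0 ∧
  rhsS12 γ sp sm s12 s13 s23 N lam A Om v1 v2 v3 = 0 ∧
  rhsS13 γ sp sm s12 s13 s23 N lam A Om v1 v2 v3 = 0 ∧
  rhsS23 γ sp sm s12 s13 s23 N lam A Om v1 v2 v3 = 0 ∧
  rhsN γ sp sm s12 s13 s23 N lam A Om v1 v2 v3 = 0 ∧
  rhsLam γ sp sm s12 s13 s23 N lam A Om v1 v2 v3 = 0 ∧
  rhsA γ sp sm s12 s13 s23 N lam A Om v1 v2 v3 = 0 ∧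
  rhsOm γ sp sm s12 s13 s23 N lam A Om v1 v2 v3 = 0 ∧
  rhsV1 γ sp sm s12 s13 s23 N lam A Om v1 v2 v3 = 0 ∧
  rhsV2 γ sp sm s12 s13 s23 N lam A Om v1 v2 v3 = 0 ∧
  rhsV3 γ sp sm s12 s13 s23 N lam A Om v1 v2 v3 = 0

/-- a solution of the tilted Bianchi type VI_(-1/9) system on the set `dom`:
the twelve evolution equations and the five constraints hold at every `τ ∈ dom`. -/
def IsSolutionOn (γ : ℝ) (dom : Set ℝ) (sp sm s12 s13 s23 N lam A Om v1 v2 v3 : ℝ → ℝ) : Prop :=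
  ∀ τ ∈ dom,
    (HasDerivAt sp (rhsSp γ (sp τ) (sm τ) (s12 τ) (s13 τ) (s23 τ) (N τ) (lam τ) (A τ) (Om τ) (v1 τ) (v2 τ) (v3 τ)) τ ∧
    HasDerivAt sm (rhsSm γ (sp τ) (sm τ) (s12 τ) (s13 τ) (s23 τ) (N τ) (lam τ) (A τ) (Om τ) (v1 τ) (v2 τ) (v3 τ)) τ ∧
    HasDerivAt s12 (rhsS12 γ (sp τ) (sm τ) (s12 τ) (s13 τ) (s23 τ) (N τ) (lam τ) (A τ) (Om τ) (v1 τ) (v2 τ) (v3 τ)) τ ∧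
    HasDerivAt s13 (rhsS13 γ (sp τ) (sm τ) (s12 τ) (s13 τ) (s23 τ) (N τ) (lam τ) (A τ) (Om τ) (v1 τ) (v2 τ) (v3 τ)) τ ∧
    HasDerivAt s23 (rhsS23 γ (sp τ) (sm τ) (s12 τ) (s13 τ) (s23 τ) (N τ) (lam τ) (A τ) (Om τ) (v1 τ) (v2 τ) (v3 τ)) τ ∧
    HasDerivAt N (rhsN γ (sp τ) (sm τ) (s12 τ) (s13 τ) (s23 τ) (N τ) (lam τ) (A τ) (Om τ) (v1 τ) (v2 τ) (v3 τ)) τ ∧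
    HasDerivAt lam (rhsLam γ (sp τ) (sm τ) (s12 τ) (s13 τ) (s23 τ) (N τ) (lam τ) (A τ) (Om τ) (v1 τ) (v2 τ) (v3 τ)) τ ∧
    HasDerivAt A (rhsA γ (sp τ) (sm τ) (s12 τ) (s13 τ) (s23 τ) (N τ) (lam τ) (A τ) (Om τ) (v1 τ) (v2 τ) (v3 τ)) τ ∧
    HasDerivAt Om (rhsOm γ (sp τ) (sm τ) (s12 τ) (s13 τ) (s23 τ) (N τ) (lam τ) (A τ) (Om τ) (v1 τ) (v2 τ) (v3 τ)) τ ∧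
    HasDerivAt v1 (rhsV1 γ (sp τ) (sm τ) (s12 τ) (s13 τ) (s23 τ) (N τ) (lam τ) (A τ) (Om τ) (v1 τ) (v2 τ) (v3 τ)) τ ∧
    HasDerivAt v2 (rhsV2 γ (sp τ) (sm τ) (s12 τ) (s13 τ) (s23 τ) (N τ) (lam τ) (A τ) (Om τ) (v1 τ) (v2 τ) (v3 τ)) τ ∧
    HasDerivAt v3 (rhsV3 γ (sp τ) (sm τ) (s12 τ) (s13 τ) (s23 τ) (N τ) (lam τ) (A τ) (Om τ) (v1 τ) (v2 τ) (v3 τ)) τ) ∧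
    SatisfiesConstraints γ (sp τ) (sm τ) (s12 τ) (s13 τ) (s23 τ) (N τ) (lam τ) (A τ) (Om τ) (v1 τ) (v2 τ) (v3 τ)

/-- the monotone function `Z3`. -/
def Z3fun (γ : ℝ) (A Om v1 v2 v3 : ℝ → ℝ) : ℝ → ℝ := fun τ =>
  (v1 τ)^2 * Om τ
    / ((A τ)^2 * Gp γ (v1 τ) (v2 τ) (v3 τ)
        * (1 - Vsq (v1 τ) (v2 τ) (v3 τ)) ^ (((2-γ)/2 : ℝ)))

/-!
On the invariant set `v2 = v3 = 0` the evolution equations of `v1`, `Ω` and `A` all have the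
form `x' = r x`, so `Z3' / Z3` is the combination `2 r_v + r_Ω - 2 r_A` of the three rates,
corrected by the logarithmic derivatives of `G₊ = 1 + (γ-1) v1²` and of `(1 - v1²)^((2-γ)/2)`.
This combination collapses to `-(2-γ)(3 - 2 A v1)` identically in `q`. Strict decrease follows
because (C1) with `Ω > 0` forces `A² < 1`, hence `2 A v1 < 2`.
-/

theorem Z3fun_eq_of_v2_v3_zero {γ : ℝ} {A Om v1 v2 v3 : ℝ → ℝ}
    (hv2 : ∀ τ, v2 τ = 0) (hv3 : ∀ τ, v3 τ = 0) :
    Z3fun γ A Om v1 v2 v3 = fun t => v1 t ^ 2 * Om t /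
      (A t ^ 2 * (1 + (γ - 1) * v1 t ^ 2) * (1 - v1 t ^ 2) ^ ((2 - γ) / 2)) := by
  funext t
  simp [Z3fun, Gp, Vsq, hv2 t, hv3 t]

theorem hasDerivAt_Z3_of_rates {k p a b c τ : ℝ} {A Om v : ℝ → ℝ}
    (hv : HasDerivAt v (a * v τ) τ) (hOm : HasDerivAt Om (b * Om τ) τ)
    (hA : HasDerivAt A (c * A τ) τ) (hA0 : A τ ≠ 0) (hk : 1 + k * v τ ^ 2 ≠ 0)
    (hv_lt : v τ ^ 2 < 1) :
    HasDerivAt (fun t => v t ^ 2 * Om t / (A t ^ 2 * (1 + k * v t ^ 2) * (1 - v t ^ 2) ^ p))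
      ((2 * a + b - 2 * c - 2 * k * a * v τ ^ 2 / (1 + k * v τ ^ 2)
          + 2 * p * a * v τ ^ 2 / (1 - v τ ^ 2)) *
        (v τ ^ 2 * Om τ / (A τ ^ 2 * (1 + k * v τ ^ 2) * (1 - v τ ^ 2) ^ p))) τ := by
  have hm : 1 - v τ ^ 2 ≠ 0 := by linarith
  have hR : (1 - v τ ^ 2) ^ p ≠ 0 := (Real.rpow_pos_of_pos (by linarith) p).ne'
  have hnum := (hv.pow 2).mul hOm
  have hden := ((hA.pow 2).mul (((hv.pow 2).const_mul k).const_add 1)).mul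
    (((hasDerivAt_const τ (1 : ℝ)).sub (hv.pow 2)).rpow_const (p := p) (Or.inl hm))
  refine (hnum.div hden (by simp [*])).congr_deriv ?_
  simp only [Pi.mul_apply, Pi.pow_apply, Pi.sub_apply]
  rw [Real.rpow_sub_one hm]
  -- `field_simp` looks for this side condition in its own normal form `1 + v² k`.
  have hk' : 1 + v τ ^ 2 * k ≠ 0 := by rwa [mul_comm]
  field_simp
  ring

def omegaRate (γ sp sm s12 s13 s23 A Om v1 v2 v3 : ℝ) : ℝ :=
  (2 * qdef γ sp sm s12 s13 s23 Om v1 v2 v3 - (3 * γ - 2) + 2 * γ * A * v1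
      + (2 * qdef γ sp sm s12 s13 s23 Om v1 v2 v3 * (γ - 1) - (2 - γ)) * Vsq v1 v2 v3
      - γ * Pdef sp sm s12 s13 s23 v1 v2 v3) / Gp γ v1 v2 v3

theorem rhsOm_eq_omegaRate_mul (γ sp sm s12 s13 s23 N lam A Om v1 v2 v3 : ℝ) :
    rhsOm γ sp sm s12 s13 s23 N lam A Om v1 v2 v3
      = omegaRate γ sp sm s12 s13 s23 A Om v1 v2 v3 * Om := by
  unfold rhsOm omegaRate
  ring

theorem rhsV1_of_v2_v3_zero (γ sp sm s12 s13 s23 N lam A Om v1 : ℝ) :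
    rhsV1 γ sp sm s12 s13 s23 N lam A Om v1 0 0
      = (Tdef γ sp sm s12 s13 s23 A v1 0 0 + 2 * sp) * v1 := by
  simp [rhsV1]

theorem Z3_rates_combine {γ sp sm s12 s13 s23 A Om v : ℝ}
    (hG : 1 + (γ - 1) * v ^ 2 ≠ 0) (hD : 1 - (γ - 1) * v ^ 2 ≠ 0) (hv : 1 - v ^ 2 ≠ 0) :
    2 * (Tdef γ sp sm s12 s13 s23 A v 0 0 + 2 * sp) + omegaRate γ sp sm s12 s13 s23 A Om v 0 0
        - 2 * (qdef γ sp sm s12 s13 s23 Om v 0 0 + 2 * sp)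
        - 2 * (γ - 1) * (Tdef γ sp sm s12 s13 s23 A v 0 0 + 2 * sp) * v ^ 2 / (1 + (γ - 1) * v ^ 2)
        + 2 * ((2 - γ) / 2) * (Tdef γ sp sm s12 s13 s23 A v 0 0 + 2 * sp) * v ^ 2 / (1 - v ^ 2)
      = -(2 - γ) * (3 - 2 * A * v) := by
  simp only [omegaRate, Tdef, Pdef, Gp, Vsq]
  generalize qdef γ sp sm s12 s13 s23 Om v 0 0 = q
  norm_num
  field_simp
  ring

theorem sq_lt_one_of_satisfiesConstraints {γ sp sm s12 s13 s23 N lam A Om v1 v2 v3 : ℝ}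
    (h : SatisfiesConstraints γ sp sm s12 s13 s23 N lam A Om v1 v2 v3) (hOm : 0 < Om) :
    A ^ 2 < 1 := by
  have hC1 := h.1
  unfold Sig2 at hC1
  nlinarith [sq_nonneg sp, sq_nonneg sm, sq_nonneg s12, sq_nonneg s13, sq_nonneg s23, sq_nonneg N]

theorem Z3_evolution (γ : ℝ) (hγ : 0 < γ ∧ γ < 2)
    (sp sm s12 s13 s23 N lam A Om v1 v2 v3 : ℝ → ℝ)
    (hsol : IsSolutionOn γ Set.univ sp sm s12 s13 s23 N lam A Om v1 v2 v3)
    (hv2 : ∀ τ : ℝ, v2 τ = 0) (hv3 : ∀ τ : ℝ, v3 τ = 0)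
    (hOm : ∀ τ : ℝ, 0 < Om τ)
    (hA : ∀ τ : ℝ, A τ ≠ 0)
    (hv1 : ∀ τ : ℝ, (v1 τ)^2 < 1) :
    (∀ τ : ℝ, HasDerivAt (Z3fun γ A Om v1 v2 v3)
        (-(2-γ) * (3 - 2*(A τ)*(v1 τ)) * Z3fun γ A Om v1 v2 v3 τ) τ) ∧
    ((∀ τ : ℝ, 0 < Z3fun γ A Om v1 v2 v3 τ) → StrictAnti (Z3fun γ A Om v1 v2 v3)) := by
  have hderiv : ∀ τ, HasDerivAt (Z3fun γ A Om v1 v2 v3)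
      (-(2 - γ) * (3 - 2 * A τ * v1 τ) * Z3fun γ A Om v1 v2 v3 τ) τ := by
    intro τ
    obtain ⟨⟨-, -, -, -, -, -, -, hdA, hdOm, hdv1, -, -⟩, -⟩ := hsol τ trivial
    rw [hv2 τ, hv3 τ] at hdA hdOm hdv1
    rw [rhsOm_eq_omegaRate_mul] at hdOm
    rw [rhsV1_of_v2_v3_zero] at hdv1
    have hv : 1 - v1 τ ^ 2 ≠ 0 := by linarith [hv1 τ]
    have hG : 1 + (γ - 1) * v1 τ ^ 2 ≠ 0 := by nlinarith [hv1 τ, sq_nonneg (v1 τ)]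
    have hD : 1 - (γ - 1) * v1 τ ^ 2 ≠ 0 := by nlinarith [hv1 τ, sq_nonneg (v1 τ)]
    have h := hasDerivAt_Z3_of_rates (p := (2 - γ) / 2) hdv1 hdOm hdA (hA τ) hG (hv1 τ)
    rw [Z3_rates_combine hG hD hv] at h
    rwa [Z3fun_eq_of_v2_v3_zero hv2 hv3]
  refine ⟨hderiv, fun hpos => strictAnti_of_hasDerivAt_neg hderiv fun τ => ?_⟩
  have hA2 := sq_lt_one_of_satisfiesConstraints (hsol τ trivial).2 (hOm τ)
  have hAv : 2 * A τ * v1 τ < 3 := by nlinarith [hv1 τ, sq_nonneg (A τ - v1 τ)]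
  exact mul_neg_of_neg_of_pos (by nlinarith [hγ.2]) (hpos τ)

end BianchiVI
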